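/- Let N ≥ 1, let s ∈ (1, ∞) and let t satisfy 1 ≤ t ≤ s. Let (μ_n) be a sequence of measurable functions on ℝ^N that is bounded in L^s(ℝ^N) (i.e., sup_n ∫_{ℝ^N} |μ_n|^s dx < ∞) and converges almost everywhere to a function μ. Then lim_{n→∞} ∫_{ℝ^N} | |μ_n|^{t−1}μ_n − |μ_n − μ|^{t−1}(μ_n − μ) − |μ|^{t−1}μ |^{s/t} dx = 0. -/

import Mathlib

open MeasureTheory Filter Topology
open scoped NNReal ENNReal

/-!
Write `φ(y) = |y|^{t-1} y`. The mean value theorem and a weighted Young inequality give, for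
every `ε > 0`, a constant `C_ε` with `|φ(a + b) - φ(a) - φ(b)| ≤ ε |a|^t + C_ε |b|^t`.
Raising this to the power `s / t` with `a = μₙ - μ` and `b = μ` bounds the integrand by
`δ |μₙ - μ|^s + C'_δ |μ|^s` for arbitrarily small `δ`. By Fatou `μ ∈ L^s`, so `μₙ - μ` stays
bounded in `L^s`, and since the integrand tends to `0` a.e., dominated convergence applied to the
integrand minus `δ |μₙ - μ|^s` shows that its integral is eventually at most a multiple of `δ`.
-/

noncomputable def signedRpow (t y : ℝ) : ℝ := |y| ^ (t - 1) * y

lemma signedRpow_zero (t : ℝ) : signedRpow t 0 = 0 := by simp [signedRpow]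

lemma rpow_sub_one_mul_self {t x : ℝ} (ht : t ≠ 0) (hx : 0 ≤ x) : x ^ (t - 1) * x = x ^ t := by
  rw [← Real.rpow_add_one' hx (by simpa using ht), sub_add_cancel]

lemma abs_signedRpow {t : ℝ} (ht : t ≠ 0) (y : ℝ) : |signedRpow t y| = |y| ^ t := by
  rw [signedRpow, abs_mul, abs_of_nonneg (by positivity), rpow_sub_one_mul_self ht (abs_nonneg y)]

lemma continuous_abs_rpow {p : ℝ} (hp : 0 ≤ p) : Continuous fun y : ℝ => |y| ^ p :=
  (Real.continuous_rpow_const hp).comp continuous_abs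

lemma hasDerivAt_signedRpow {t : ℝ} (ht : 1 ≤ t) (x : ℝ) :
    HasDerivAt (signedRpow t) (t * |x| ^ (t - 1)) x := by
  rcases ht.eq_or_lt with rfl | ht
  · have h_id : signedRpow 1 = id := funext fun y => by simp [signedRpow]
    simpa [h_id] using hasDerivAt_id x
  have ht0 : t ≠ 0 := by positivity
  rcases lt_trichotomy x 0 with hx | rfl | hx
  · have h := ((hasDerivAt_neg x).rpow_const (p := t) (Or.inr ht.le)).neg
    rw [abs_of_neg hx]
    refine (h.congr_deriv (by ring)).congr_of_eventuallyEq ?_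
    filter_upwards [Iio_mem_nhds hx] with y (hy : y < 0)
    rw [Pi.neg_apply, signedRpow, abs_of_neg hy, ← rpow_sub_one_mul_self ht0 (neg_nonneg.2 hy.le)]
    ring
  · rw [abs_zero, Real.zero_rpow (sub_ne_zero.2 ht.ne'), mul_zero, hasDerivAt_iff_tendsto_slope]
    have h := (continuous_abs_rpow (sub_nonneg.2 ht.le)).tendsto 0
    rw [abs_zero, Real.zero_rpow (sub_ne_zero.2 ht.ne')] at h
    refine (h.mono_left nhdsWithin_le_nhds).congr' ?_
    filter_upwards [self_mem_nhdsWithin] with y (hy : y ≠ 0)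
    simp [slope_def_field, signedRpow, hy]
  · refine ((Real.hasDerivAt_rpow_const (Or.inr ht.le)).congr_deriv
      (by rw [abs_of_pos hx])).congr_of_eventuallyEq ?_
    filter_upwards [Ioi_mem_nhds hx] with y (hy : 0 < y)
    rw [signedRpow, abs_of_pos hy, rpow_sub_one_mul_self ht0 hy.le]

lemma continuous_signedRpow {t : ℝ} (ht : 1 ≤ t) : Continuous (signedRpow t) :=
  continuous_iff_continuousAt.2 fun x => (hasDerivAt_signedRpow ht x).continuousAt

lemma abs_signedRpow_add_sub_le {t : ℝ} (ht : 1 ≤ t) (a b : ℝ) :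
    |signedRpow t (a + b) - signedRpow t a| ≤ t * (|a| + |b|) ^ (t - 1) * |b| := by
  set R := |a| + |b|
  have hderiv_le : ∀ y ∈ Set.Icc (-R) R, ‖t * |y| ^ (t - 1)‖ ≤ t * R ^ (t - 1) := fun y hy => by
    rw [Real.norm_eq_abs, abs_of_nonneg (by positivity)]
    gcongr
    exact abs_le.2 hy
  have h := (convex_Icc (-R) R).norm_image_sub_le_of_norm_hasDerivWithin_le
    (fun y _ => (hasDerivAt_signedRpow ht y).hasDerivWithinAt) hderiv_le
    (abs_le.1 (le_add_of_nonneg_right (abs_nonneg b))) (abs_le.1 (abs_add_le a b))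
  simpa only [Real.norm_eq_abs, add_sub_cancel_left] using h

lemma rpow_add_le_two_rpow_mul {p x y : ℝ} (hp : 0 ≤ p) (hx : 0 ≤ x) (hy : 0 ≤ y) :
    (x + y) ^ p ≤ 2 ^ p * (x ^ p + y ^ p) := by
  calc (x + y) ^ p ≤ (2 * max x y) ^ p := by
        gcongr
        linarith [le_max_left x y, le_max_right x y]
    _ = 2 ^ p * max x y ^ p := Real.mul_rpow zero_le_two (hx.trans (le_max_left x y))
    _ ≤ 2 ^ p * (x ^ p + y ^ p) := by
        gcongr
        rcases max_choice x y with h | h <;> rw [h]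
        · exact le_add_of_nonneg_right (by positivity)
        · exact le_add_of_nonneg_left (by positivity)

lemma rpow_sub_one_mul_le {t ε a b : ℝ} (ht : 1 ≤ t) (hε : 0 < ε) (ha : 0 ≤ a) (hb : 0 ≤ b) :
    a ^ (t - 1) * b ≤ ε * a ^ t + ε ^ (1 - t) * b ^ t := by
  have ht0 : t ≠ 0 := by positivity
  rcases le_or_gt b (ε * a) with h | h
  · calc a ^ (t - 1) * b ≤ a ^ (t - 1) * (ε * a) := by gcongr
      _ = ε * a ^ t := by rw [← rpow_sub_one_mul_self ht0 ha]; ring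
      _ ≤ ε * a ^ t + ε ^ (1 - t) * b ^ t := le_add_of_nonneg_right (by positivity)
  · calc a ^ (t - 1) * b ≤ (b / ε) ^ (t - 1) * b := by
          gcongr
          rw [le_div_iff₀ hε]; linarith
      _ = ε ^ (1 - t) * b ^ t := by
          rw [Real.div_rpow hb hε.le, show 1 - t = -(t - 1) by ring, Real.rpow_neg hε.le,
            ← rpow_sub_one_mul_self ht0 hb]
          ring
      _ ≤ ε * a ^ t + ε ^ (1 - t) * b ^ t := le_add_of_nonneg_left (by positivity)

lemma exists_abs_signedRpow_add_sub_sub_le {t ε : ℝ} (ht : 1 ≤ t) (hε : 0 < ε) :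
    ∃ C : ℝ, 0 ≤ C ∧ ∀ a b : ℝ,
      |signedRpow t (a + b) - signedRpow t a - signedRpow t b| ≤ ε * |a| ^ t + C * |b| ^ t := by
  have ht0 : t ≠ 0 := by positivity
  set K : ℝ := t * 2 ^ (t - 1)
  have hK : 0 < K := by positivity
  refine ⟨K * (ε / K) ^ (1 - t) + K + 1, by positivity, fun a b => ?_⟩
  have hlip : |signedRpow t (a + b) - signedRpow t a|
      ≤ K * (|a| ^ (t - 1) * |b|) + K * |b| ^ t :=
    calc |signedRpow t (a + b) - signedRpow t a| ≤ t * (|a| + |b|) ^ (t - 1) * |b| :=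
          abs_signedRpow_add_sub_le ht a b
      _ ≤ t * (2 ^ (t - 1) * (|a| ^ (t - 1) + |b| ^ (t - 1))) * |b| := by
          gcongr
          exact rpow_add_le_two_rpow_mul (by linarith) (abs_nonneg a) (abs_nonneg b)
      _ = K * (|a| ^ (t - 1) * |b|) + K * |b| ^ t := by
          rw [← rpow_sub_one_mul_self ht0 (abs_nonneg b)]; ring
  have hyoung := rpow_sub_one_mul_le ht (div_pos hε hK) (abs_nonneg a) (abs_nonneg b)
  calc |signedRpow t (a + b) - signedRpow t a - signedRpow t b|
      ≤ |signedRpow t (a + b) - signedRpow t a| + |b| ^ t := by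
        rw [← abs_signedRpow ht0]; exact abs_sub _ _
    _ ≤ K * (ε / K * |a| ^ t + (ε / K) ^ (1 - t) * |b| ^ t) + K * |b| ^ t + |b| ^ t := by
        linarith [mul_le_mul_of_nonneg_left hyoung hK.le]
    _ = ε * |a| ^ t + (K * (ε / K) ^ (1 - t) + K + 1) * |b| ^ t := by
        field_simp
        ring

lemma exists_abs_signedRpow_add_sub_sub_rpow_le {s t : ℝ} (hs : 0 < s) (ht : 1 ≤ t) {δ : ℝ≥0}
    (hδ : 0 < δ) : ∃ C : ℝ≥0, ∀ a b : ℝ,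
      |signedRpow t (a + b) - signedRpow t a - signedRpow t b| ^ (s / t)
        ≤ δ * |a| ^ s + C * |b| ^ s := by
  set p := s / t
  have hp : 0 < p := by positivity
  set ε : ℝ := (δ / 2 ^ p) ^ p⁻¹
  have hε : 0 < ε := by positivity
  have hεp : 2 ^ p * ε ^ p = δ := by
    rw [← Real.rpow_mul (by positivity), inv_mul_cancel₀ hp.ne', Real.rpow_one]
    field_simp
  have hpow : ∀ x : ℝ, (|x| ^ t) ^ p = |x| ^ s := fun x => by
    rw [← Real.rpow_mul (abs_nonneg x), mul_div_cancel₀ s (by positivity)]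
  obtain ⟨C, hC0, hC⟩ := exists_abs_signedRpow_add_sub_sub_le ht hε
  refine ⟨⟨2 ^ p * C ^ p, by positivity⟩, fun a b => ?_⟩
  calc |signedRpow t (a + b) - signedRpow t a - signedRpow t b| ^ p
      ≤ (ε * |a| ^ t + C * |b| ^ t) ^ p := by gcongr; exact hC a b
    _ ≤ 2 ^ p * ((ε * |a| ^ t) ^ p + (C * |b| ^ t) ^ p) :=
        rpow_add_le_two_rpow_mul hp.le (by positivity) (by positivity)
    _ = δ * |a| ^ s + 2 ^ p * C ^ p * |b| ^ s := by
        rw [Real.mul_rpow hε.le (by positivity), Real.mul_rpow hC0 (by positivity), hpow, hpow,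
          ← hεp]
        ring

section Integration

variable {α : Type*} [MeasurableSpace α] {μ : Measure α}

/-- Dominated convergence applies to `g n - δ * h n`, which is dominated by `C * F`. -/
theorem tendsto_lintegral_zero_of_le_smul_add {g h : ℕ → α → ℝ≥0∞} {F : α → ℝ≥0∞} {R : ℝ≥0∞}
    (hR : R ≠ ∞) (hg : ∀ n, AEMeasurable (g n) μ) (hh : ∀ n, AEMeasurable (h n) μ)
    (hhR : ∀ n, ∫⁻ x, h n x ∂μ ≤ R) (hF : ∫⁻ x, F x ∂μ ≠ ∞)
    (hdom : ∀ δ : ℝ≥0, 0 < δ → ∃ C : ℝ≥0, ∀ n x, g n x ≤ δ * h n x + C * F x)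
    (hlim : ∀ᵐ x ∂μ, Tendsto (fun n => g n x) atTop (𝓝 0)) :
    Tendsto (fun n => ∫⁻ x, g n x ∂μ) atTop (𝓝 0) := by
  refine ENNReal.tendsto_nhds_zero.2 fun ε hε => ?_
  obtain ⟨δ, hδ, hδR⟩ := ENNReal.exists_nnreal_pos_mul_lt hR (ENNReal.half_pos hε.ne').ne'
  obtain ⟨C, hC⟩ := hdom δ hδ
  have hrest : Tendsto (fun n => ∫⁻ x, g n x - δ * h n x ∂μ) atTop (𝓝 0) := by
    have h0 := tendsto_lintegral_of_dominated_convergence' (fun x => C * F x)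
      (fun n => (hg n).sub ((hh n).const_mul _))
      (fun n => ae_of_all _ fun x => tsub_le_iff_right.2 ((hC n x).trans_eq (add_comm _ _)))
      (by rw [lintegral_const_mul' _ _ ENNReal.coe_ne_top]; exact ENNReal.mul_ne_top (by simp) hF)
      (hlim.mono fun x hx => tendsto_of_tendsto_of_tendsto_of_le_of_le tendsto_const_nhds hx
        (fun _ => zero_le) fun _ => tsub_le_self)
    simpa using h0
  filter_upwards [hrest.eventually_le_const (ENNReal.half_pos hε.ne')] with n hn
  calc ∫⁻ x, g n x ∂μ ≤ ∫⁻ x, (g n x - δ * h n x) + δ * h n x ∂μ :=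
        lintegral_mono fun x => le_tsub_add
    _ = ∫⁻ x, g n x - δ * h n x ∂μ + δ * ∫⁻ x, h n x ∂μ := by
        rw [lintegral_add_right' _ ((hh n).const_mul _),
          lintegral_const_mul' _ _ ENNReal.coe_ne_top]
    _ ≤ ε / 2 + δ * R := by gcongr; exact hhR n
    _ ≤ ε / 2 + ε / 2 := by gcongr
    _ = ε := ENNReal.add_halves ε

lemma lintegral_ofReal_abs_rpow_le_of_tendsto {s : ℝ} (hs : 0 ≤ s) {f : ℕ → α → ℝ} {g : α → ℝ}
    {M : ℝ≥0∞} (hf : ∀ n, AEMeasurable (f n) μ)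
    (hM : ∀ n, ∫⁻ x, ENNReal.ofReal (|f n x| ^ s) ∂μ ≤ M)
    (hlim : ∀ᵐ x ∂μ, Tendsto (fun n => f n x) atTop (𝓝 (g x))) :
    ∫⁻ x, ENNReal.ofReal (|g x| ^ s) ∂μ ≤ M :=
  calc ∫⁻ x, ENNReal.ofReal (|g x| ^ s) ∂μ
      = ∫⁻ x, liminf (fun n => ENNReal.ofReal (|f n x| ^ s)) atTop ∂μ :=
        lintegral_congr_ae <| hlim.mono fun _ hx =>
          (ENNReal.tendsto_ofReal (((continuous_abs_rpow hs).tendsto _).comp hx)).liminf_eq.symm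
    _ ≤ liminf (fun n => ∫⁻ x, ENNReal.ofReal (|f n x| ^ s) ∂μ) atTop :=
        lintegral_liminf_le' fun n =>
          ((continuous_abs_rpow hs).measurable.comp_aemeasurable (hf n)).ennreal_ofReal
    _ ≤ M := liminf_le_of_frequently_le' (Frequently.of_forall hM)

lemma lintegral_ofReal_abs_sub_rpow_le {s : ℝ} (hs : 0 ≤ s) {u v : α → ℝ}
    (hu : AEMeasurable u μ) :
    ∫⁻ x, ENNReal.ofReal (|u x - v x| ^ s) ∂μ
      ≤ ENNReal.ofReal (2 ^ s) * (∫⁻ x, ENNReal.ofReal (|u x| ^ s) ∂μ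
        + ∫⁻ x, ENNReal.ofReal (|v x| ^ s) ∂μ) := by
  have hu_rpow : AEMeasurable (fun x => ENNReal.ofReal (|u x| ^ s)) μ :=
    ((continuous_abs_rpow hs).measurable.comp_aemeasurable hu).ennreal_ofReal
  rw [← lintegral_add_left' hu_rpow,
    ← lintegral_const_mul' _ _ ENNReal.ofReal_ne_top]
  refine lintegral_mono fun x => ?_
  rw [← ENNReal.ofReal_add (by positivity) (by positivity), ← ENNReal.ofReal_mul (by positivity)]
  refine ENNReal.ofReal_le_ofReal ?_
  calc |u x - v x| ^ s ≤ (|u x| + |v x|) ^ s := by gcongr; exact abs_sub _ _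
    _ ≤ 2 ^ s * (|u x| ^ s + |v x| ^ s) :=
        rpow_add_le_two_rpow_mul hs (abs_nonneg _) (abs_nonneg _)

theorem tendsto_integral_signedRpow_brezisLieb {s t : ℝ} (hs : 0 < s) (ht : 1 ≤ t)
    {f : ℕ → α → ℝ} {g : α → ℝ} (hf : ∀ n, AEStronglyMeasurable (f n) μ)
    (hbdd : ∃ M : ℝ≥0, ∀ n, ∫⁻ x, ENNReal.ofReal (|f n x| ^ s) ∂μ ≤ M)
    (hlim : ∀ᵐ x ∂μ, Tendsto (fun n => f n x) atTop (𝓝 (g x))) :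
    Tendsto (fun n => ∫ x, |signedRpow t (f n x) - signedRpow t (f n x - g x)
      - signedRpow t (g x)| ^ (s / t) ∂μ) atTop (𝓝 0) := by
  obtain ⟨M, hM⟩ := hbdd
  set Φ : ℝ × ℝ → ℝ := fun p =>
    |signedRpow t p.1 - signedRpow t (p.1 - p.2) - signedRpow t p.2| ^ (s / t)
  have hΦ : Continuous Φ := by
    have hφ := continuous_signedRpow ht
    exact (continuous_abs_rpow (by positivity)).comp (by fun_prop)
  have hg : AEStronglyMeasurable g μ := aestronglyMeasurable_of_tendsto_ae _ hf hlim
  have hΦfg : ∀ n, AEStronglyMeasurable (fun x => Φ (f n x, g x)) μ := fun n =>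
    hΦ.comp_aestronglyMeasurable ((hf n).prodMk hg)
  have hgM := lintegral_ofReal_abs_rpow_le_of_tendsto hs.le (fun n => (hf n).aemeasurable) hM hlim
  have hlintegral : Tendsto (fun n => ∫⁻ x, ENNReal.ofReal (Φ (f n x, g x)) ∂μ) atTop (𝓝 0) := by
    refine tendsto_lintegral_zero_of_le_smul_add (R := ENNReal.ofReal (2 ^ s) * (M + M))
      (by finiteness) (fun n => (hΦfg n).aemeasurable.ennreal_ofReal)
      (fun n => ((continuous_abs_rpow hs.le).comp_aestronglyMeasurable
        ((hf n).sub hg)).aemeasurable.ennreal_ofReal)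
      (fun n => (lintegral_ofReal_abs_sub_rpow_le hs.le (hf n).aemeasurable).trans
        (by gcongr; exact hM n))
      (hgM.trans_lt ENNReal.coe_lt_top).ne ?_ ?_
    · intro δ hδ
      obtain ⟨C, hC⟩ := exists_abs_signedRpow_add_sub_sub_rpow_le hs ht hδ
      refine ⟨C, fun n x => ?_⟩
      have h := hC (f n x - g x) (g x)
      rw [sub_add_cancel] at h
      rw [← ENNReal.ofReal_coe_nnreal, ← ENNReal.ofReal_coe_nnreal (p := C),
        ← ENNReal.ofReal_mul (by positivity), ← ENNReal.ofReal_mul (by positivity),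
        ← ENNReal.ofReal_add (by positivity) (by positivity)]
      exact ENNReal.ofReal_le_ofReal h
    · filter_upwards [hlim] with x hx
      have h := (hΦ.tendsto (g x, g x)).comp (hx.prodMk_nhds tendsto_const_nhds)
      simpa [Φ, signedRpow_zero, Real.zero_rpow (by positivity : s / t ≠ 0)]
        using ENNReal.tendsto_ofReal h
  have hintegral : ∀ n, ∫ x, Φ (f n x, g x) ∂μ
      = (∫⁻ x, ENNReal.ofReal (Φ (f n x, g x)) ∂μ).toReal := fun n =>
    integral_eq_lintegral_of_nonneg_ae (ae_of_all _ fun x => by positivity) (hΦfg n)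
  show Tendsto (fun n => ∫ x, Φ (f n x, g x) ∂μ) atTop (𝓝 0)
  simpa only [hintegral, Function.comp_def, ENNReal.toReal_zero]
    using (ENNReal.tendsto_toReal ENNReal.zero_ne_top).comp hlintegral

end Integration

theorem stmt_2_general (N : ℕ) (s t : ℝ) (hs : 1 < s) (ht : 1 ≤ t)
    (μn : ℕ → EuclideanSpace ℝ (Fin N) → ℝ) (μ : EuclideanSpace ℝ (Fin N) → ℝ)
    (hmeas : ∀ n, Measurable (μn n))
    (hbdd : ∃ M : ℝ≥0, ∀ n,
      ∫⁻ x, ENNReal.ofReal (|μn n x| ^ s) ∂volume ≤ M)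
    (hae : ∀ᵐ x ∂(volume : Measure (EuclideanSpace ℝ (Fin N))),
      Tendsto (fun n => μn n x) atTop (𝓝 (μ x))) :
    Tendsto (fun n =>
        ∫ x, |(|μn n x| ^ (t - 1) * μn n x
              - |μn n x - μ x| ^ (t - 1) * (μn n x - μ x)
              - |μ x| ^ (t - 1) * μ x)| ^ (s / t) ∂volume)
      atTop (𝓝 0) :=
  tendsto_integral_signedRpow_brezisLieb (by linarith) ht (fun n => (hmeas n).aestronglyMeasurable)
    hbdd hae

/-- Local Brezis–Lieb lemma, second part: if `1 < s`, `1 ≤ t ≤ s`, `(μn)` is a sequence of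
measurable functions on `ℝ^N` bounded in `L^s` that converges almost everywhere to `μ`, then
`∫ | |μn|^{t−1}μn − |μn − μ|^{t−1}(μn − μ) − |μ|^{t−1}μ |^{s/t} → 0`. -/
theorem stmt_2 (N : ℕ) (hN : 1 ≤ N) (s t : ℝ) (hs : 1 < s) (ht : 1 ≤ t) (hts : t ≤ s)
    (μn : ℕ → EuclideanSpace ℝ (Fin N) → ℝ) (μ : EuclideanSpace ℝ (Fin N) → ℝ)
    (hmeas : ∀ n, Measurable (μn n)) (hμ : Measurable μ)
    (hbdd : ∃ M : ℝ≥0, ∀ n,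
      ∫⁻ x, ENNReal.ofReal (|μn n x| ^ s) ∂volume ≤ M)
    (hae : ∀ᵐ x ∂(volume : Measure (EuclideanSpace ℝ (Fin N))),
      Tendsto (fun n => μn n x) atTop (𝓝 (μ x))) :
    Tendsto (fun n =>
        ∫ x, |(|μn n x| ^ (t - 1) * μn n x
              - |μn n x - μ x| ^ (t - 1) * (μn n x - μ x)
              - |μ x| ^ (t - 1) * μ x)| ^ (s / t) ∂volume)
      atTop (𝓝 0) :=
  stmt_2_general N s t hs ht μn μ hmeas hbdd hae
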